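/- arXiv:2508.06306 — 4 statements merged into one kernel-verified Lean document; each statement's English description precedes it below -/
import Mathlib

section
/- If u(x,y) = α(x)β(y) is a nonzero separable smooth function satisfying Δ²u = μu on the square Ω = [−1,1]² with boundary conditions Δu = 0 and ∂_ν Δu = 0 on ∂Ω, then μ = 0 and Δu ≡ 0 on Ω. -/
open Real Set

noncomputable def pdx2 (u : ℝ → ℝ → ℝ) (x y : ℝ) : ℝ :=
  iteratedDeriv 2 (fun t => u t y) x

noncomputable def pdy2 (u : ℝ → ℝ → ℝ) (x y : ℝ) : ℝ :=
  iteratedDeriv 2 (fun t => u x t) y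

/-- The two-dimensional Laplacian. -/
noncomputable def lap (u : ℝ → ℝ → ℝ) (x y : ℝ) : ℝ :=
  pdx2 u x y + pdy2 u x y

open scoped ContDiff

namespace Stmt4Aux

variable {f g : ℝ → ℝ}

lemma one_le_inf : (1 : WithTop ℕ∞) ≤ ∞ := by exact_mod_cast le_top

lemma smooth_itd (hf : ContDiff ℝ ∞ f) (n : ℕ) : ContDiff ℝ ∞ (iteratedDeriv n f) := by
  rw [iteratedDeriv_eq_iterate]; exact ContDiff.iterate_deriv n hf

lemma diffAt (hf : ContDiff ℝ ∞ f) (x : ℝ) : DifferentiableAt ℝ f x :=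
  (hf.differentiable (by simp)) x

lemma hasDerivAt_itd (hf : ContDiff ℝ ∞ f) (n : ℕ) (x : ℝ) :
    HasDerivAt (iteratedDeriv n f) (iteratedDeriv (n + 1) f x) x := by
  rw [iteratedDeriv_succ]
  exact (diffAt (smooth_itd hf n) x).hasDerivAt

lemma itd_mul_const (hf : ContDiff ℝ ∞ f) (c : ℝ) (n : ℕ) :
    iteratedDeriv n (fun t => f t * c) = fun x => iteratedDeriv n f x * c := by
  induction n with
  | zero => simp
  | succ n ih =>
    rw [iteratedDeriv_succ, ih, iteratedDeriv_succ]
    funext x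
    exact deriv_mul_const (diffAt (smooth_itd hf n) x) c

lemma itd_const_mul (hf : ContDiff ℝ ∞ f) (c : ℝ) (n : ℕ) :
    iteratedDeriv n (fun t => c * f t) = fun x => c * iteratedDeriv n f x := by
  have h : (fun t => c * f t) = fun t => f t * c := by funext t; ring
  rw [h, itd_mul_const hf c n]
  funext x; ring

lemma itd_add (hf : ContDiff ℝ ∞ f) (hg : ContDiff ℝ ∞ g) (n : ℕ) :
    iteratedDeriv n (fun t => f t + g t) = fun x => iteratedDeriv n f x + iteratedDeriv n g x := by
  induction n with
  | zero => simp
  | succ n ih =>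
    rw [iteratedDeriv_succ, ih, iteratedDeriv_succ, iteratedDeriv_succ]
    funext x
    exact deriv_add (diffAt (smooth_itd hf n) x) (diffAt (smooth_itd hg n) x)

lemma itd_itd (m n : ℕ) : iteratedDeriv m (iteratedDeriv n f) = iteratedDeriv (m + n) f := by
  simp only [iteratedDeriv_eq_iterate]
  exact (Function.iterate_add_apply deriv m n f).symm

lemma deriv_comb (hf : ContDiff ℝ ∞ f) (hg : ContDiff ℝ ∞ g) (c d x : ℝ) :
    deriv (fun t => f t * c + g t * d) x = deriv f x * c + deriv g x * d := by
  rw [deriv_fun_add ((diffAt hf x).mul_const c) ((diffAt hg x).mul_const d),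
    deriv_mul_const (diffAt hf x), deriv_mul_const (diffAt hg x)]

lemma deriv_comb' (hf : ContDiff ℝ ∞ f) (hg : ContDiff ℝ ∞ g) (c d x : ℝ) :
    deriv (fun t => c * f t + d * g t) x = c * deriv f x + d * deriv g x := by
  rw [deriv_fun_add ((diffAt hf x).const_mul c) ((diffAt hg x).const_mul d),
    deriv_const_mul c (diffAt hf x), deriv_const_mul d (diffAt hg x)]

lemma itd2_comb (hf : ContDiff ℝ ∞ f) (hg : ContDiff ℝ ∞ g) (c d x : ℝ) :
    iteratedDeriv 2 (fun t => f t * c + g t * d) x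
      = iteratedDeriv 2 f x * c + iteratedDeriv 2 g x * d := by
  calc iteratedDeriv 2 (fun t => f t * c + g t * d) x
      = iteratedDeriv 2 (fun s => f s * c) x + iteratedDeriv 2 (fun s => g s * d) x :=
        congrFun (itd_add (hf.mul contDiff_const) (hg.mul contDiff_const) 2) x
    _ = iteratedDeriv 2 f x * c + iteratedDeriv 2 g x * d := by
        rw [itd_mul_const hf c 2, itd_mul_const hg d 2]

lemma itd2_comb' (hf : ContDiff ℝ ∞ f) (hg : ContDiff ℝ ∞ g) (c d x : ℝ) :
    iteratedDeriv 2 (fun t => c * f t + d * g t) x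
      = c * iteratedDeriv 2 f x + d * iteratedDeriv 2 g x := by
  calc iteratedDeriv 2 (fun t => c * f t + d * g t) x
      = iteratedDeriv 2 (fun s => c * f s) x + iteratedDeriv 2 (fun s => d * g s) x :=
        congrFun (itd_add (contDiff_const.mul hf) (contDiff_const.mul hg) 2) x
    _ = c * iteratedDeriv 2 f x + d * iteratedDeriv 2 g x := by
        rw [itd_const_mul hf c 2, itd_const_mul hg d 2]


lemma eqOn_deriv (hf : ContDiff ℝ ∞ f) (hg : ContDiff ℝ ∞ g) (c : ℝ)
    (h : ∀ t ∈ Icc (-1:ℝ) 1, f t = c * g t) :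
    ∀ t ∈ Icc (-1:ℝ) 1, deriv f t = c * deriv g t := by
  have hIoo : ∀ t ∈ Ioo (-1:ℝ) 1, deriv f t = c * deriv g t := by
    intro t ht
    have hev : f =ᶠ[nhds t] fun s => c * g s :=
      Filter.eventuallyEq_of_mem (isOpen_Ioo.mem_nhds ht)
        (fun s hs => h s (Ioo_subset_Icc_self hs))
    rw [hev.deriv_eq, deriv_const_mul c (diffAt hg t)]
  have hcl : EqOn (deriv f) (fun t => c * deriv g t) (Icc (-1:ℝ) 1) := by
    rw [← closure_Ioo (by norm_num : (-1:ℝ) ≠ 1)]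
    exact Set.EqOn.closure hIoo (hf.continuous_deriv one_le_inf)
      (continuous_const.mul (hg.continuous_deriv one_le_inf))
  exact fun t ht => hcl ht

lemma exists_ne_interior (hf : Continuous f) (h : ∃ x ∈ Icc (-1:ℝ) 1, f x ≠ 0) :
    ∃ x ∈ Ioo (-1:ℝ) 1, f x ≠ 0 := by
  by_contra hc
  push_neg at hc
  obtain ⟨x, hx, hfx⟩ := h
  apply hfx
  have hcl : EqOn f (fun _ => (0:ℝ)) (Icc (-1:ℝ) 1) := by
    rw [← closure_Ioo (by norm_num : (-1:ℝ) ≠ 1)]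
    exact Set.EqOn.closure (fun s hs => hc s hs) hf continuous_const
  exact hcl hx

lemma itd2_zero (h : ∀ t ∈ Ioo (-1:ℝ) 1, f t = 0) {x : ℝ} (hx : x ∈ Ioo (-1:ℝ) 1) :
    iteratedDeriv 2 f x = 0 := by
  have hd : ∀ t ∈ Ioo (-1:ℝ) 1, deriv f t = 0 := by
    intro t ht
    have hev : f =ᶠ[nhds t] (fun _ => (0:ℝ)) :=
      Filter.eventuallyEq_of_mem (isOpen_Ioo.mem_nhds ht) (fun s hs => h s hs)
    rw [hev.deriv_eq]; simp
  have hev2 : deriv f =ᶠ[nhds x] (fun _ => (0:ℝ)) :=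
    Filter.eventuallyEq_of_mem (isOpen_Ioo.mem_nhds hx) (fun s hs => hd s hs)
  rw [iteratedDeriv_succ, iteratedDeriv_one, hev2.deriv_eq]; simp

lemma ode_zero {E : Type*} [NormedAddCommGroup E] [NormedSpace ℝ E] (L : E →L[ℝ] E) {F : ℝ → E}
    (hF : Continuous F) (hF' : ∀ t ∈ Icc (-1:ℝ) 1, HasDerivAt F (L (F t)) t) (h1 : F 1 = 0) :
    ∀ t ∈ Icc (-1:ℝ) 1, F t = 0 := by
  have key : EqOn F (fun _ => (0:E)) (Icc (-1:ℝ) 1) := by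
    apply ODE_solution_unique_of_mem_Icc_left (v := fun _ x => L x) (s := fun _ => univ)
      (K := ‖L‖₊) (fun _ _ => L.lipschitz.lipschitzOnWith (s := univ))
      hF.continuousOn
      (fun t ht => (hF' t (Ioc_subset_Icc_self ht)).hasDerivWithinAt)
      (fun _ _ => trivial)
      continuousOn_const
      (fun t _ => by simpa using (hasDerivAt_const t (0:E)).hasDerivWithinAt)
      (fun _ _ => trivial)
      (by simpa using h1)
  exact fun t ht => key ht

lemma ode2_zero (hf : ContDiff ℝ ∞ f) (lam : ℝ)
    (hode : ∀ t ∈ Icc (-1:ℝ) 1, iteratedDeriv 2 f t = lam * f t)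
    (h0 : f 1 = 0) (h1 : deriv f 1 = 0) : ∀ t ∈ Icc (-1:ℝ) 1, f t = 0 := by
  let L : ℝ × ℝ →L[ℝ] ℝ × ℝ :=
    (ContinuousLinearMap.snd ℝ ℝ ℝ).prod (lam • ContinuousLinearMap.fst ℝ ℝ ℝ)
  have happ : ∀ v : ℝ × ℝ, L v = (v.2, lam * v.1) := fun v => rfl
  have hFc : Continuous fun t => (f t, deriv f t) :=
    (hf.continuous).prodMk (hf.continuous_deriv one_le_inf)
  have hF' : ∀ t ∈ Icc (-1:ℝ) 1,
      HasDerivAt (fun t => (f t, deriv f t)) (L (f t, deriv f t)) t := by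
    intro t ht
    have d0 : HasDerivAt f (deriv f t) t := (diffAt hf t).hasDerivAt
    have d1 : HasDerivAt (deriv f) (iteratedDeriv 2 f t) t := by
      have := hasDerivAt_itd hf 1 t; rwa [iteratedDeriv_one] at this
    rw [happ]
    simp only
    rw [← hode t ht]
    exact d0.prodMk d1
  have := ode_zero L hFc hF' (by rw [Prod.mk_eq_zero]; exact ⟨h0, h1⟩)
  intro t ht
  exact congrArg Prod.fst (this t ht)

lemma ode4_zero (hf : ContDiff ℝ ∞ f) (c2 c0 : ℝ)
    (hode : ∀ t ∈ Icc (-1:ℝ) 1, iteratedDeriv 4 f t = c2 * iteratedDeriv 2 f t + c0 * f t)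
    (h0 : f 1 = 0) (h1 : deriv f 1 = 0) (h2 : iteratedDeriv 2 f 1 = 0)
    (h3 : iteratedDeriv 3 f 1 = 0) : ∀ t ∈ Icc (-1:ℝ) 1, f t = 0 := by
  let p0 : ℝ × ℝ × ℝ × ℝ →L[ℝ] ℝ := ContinuousLinearMap.fst ℝ ℝ (ℝ × ℝ × ℝ)
  let r1 : ℝ × ℝ × ℝ × ℝ →L[ℝ] ℝ × ℝ × ℝ := ContinuousLinearMap.snd ℝ ℝ (ℝ × ℝ × ℝ)
  let p1 : ℝ × ℝ × ℝ × ℝ →L[ℝ] ℝ := (ContinuousLinearMap.fst ℝ ℝ (ℝ × ℝ)).comp r1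
  let r2 : ℝ × ℝ × ℝ × ℝ →L[ℝ] ℝ × ℝ := (ContinuousLinearMap.snd ℝ ℝ (ℝ × ℝ)).comp r1
  let p2 : ℝ × ℝ × ℝ × ℝ →L[ℝ] ℝ := (ContinuousLinearMap.fst ℝ ℝ ℝ).comp r2
  let p3 : ℝ × ℝ × ℝ × ℝ →L[ℝ] ℝ := (ContinuousLinearMap.snd ℝ ℝ ℝ).comp r2
  let L : ℝ × ℝ × ℝ × ℝ →L[ℝ] ℝ × ℝ × ℝ × ℝ :=
    p1.prod (p2.prod (p3.prod (c2 • p2 + c0 • p0)))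
  have happ : ∀ v : ℝ × ℝ × ℝ × ℝ, L v = (v.2.1, v.2.2.1, v.2.2.2, c2 * v.2.2.1 + c0 * v.1) :=
    fun v => rfl
  have hFc : Continuous fun t =>
      (f t, deriv f t, iteratedDeriv 2 f t, iteratedDeriv 3 f t) := by
    refine (hf.continuous).prodMk (Continuous.prodMk ?_ (Continuous.prodMk ?_ ?_))
    · exact hf.continuous_deriv one_le_inf
    · exact (smooth_itd hf 2).continuous
    · exact (smooth_itd hf 3).continuous
  have hF' : ∀ t ∈ Icc (-1:ℝ) 1,
      HasDerivAt (fun t => (f t, deriv f t, iteratedDeriv 2 f t, iteratedDeriv 3 f t))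
        (L (f t, deriv f t, iteratedDeriv 2 f t, iteratedDeriv 3 f t)) t := by
    intro t ht
    have d0 : HasDerivAt f (deriv f t) t := (diffAt hf t).hasDerivAt
    have d1 : HasDerivAt (deriv f) (iteratedDeriv 2 f t) t := by
      have := hasDerivAt_itd hf 1 t; rwa [iteratedDeriv_one] at this
    have d2 : HasDerivAt (iteratedDeriv 2 f) (iteratedDeriv 3 f t) t := hasDerivAt_itd hf 2 t
    have d3 : HasDerivAt (iteratedDeriv 3 f) (iteratedDeriv 4 f t) t := hasDerivAt_itd hf 3 t
    rw [happ]
    simp only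
    rw [← hode t ht]
    exact d0.prodMk (d1.prodMk (d2.prodMk d3))
  have := ode_zero L hFc hF' (by rw [h0, h1, h2, h3]; rfl)
  intro t ht
  exact congrArg Prod.fst (this t ht)


variable {α β : ℝ → ℝ}

lemma lap_sep (hα : ContDiff ℝ ∞ α) (hβ : ContDiff ℝ ∞ β) (x y : ℝ) :
    lap (fun x y => α x * β y) x y
      = iteratedDeriv 2 α x * β y + α x * iteratedDeriv 2 β y := by
  simp only [lap, pdx2, pdy2]
  congr 1
  · exact congrFun (itd_mul_const hα (β y) 2) x
  · exact congrFun (itd_const_mul hβ (α x) 2) y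

lemma laplap_sep (hα : ContDiff ℝ ∞ α) (hβ : ContDiff ℝ ∞ β) (x y : ℝ) :
    lap (lap (fun x y => α x * β y)) x y
      = iteratedDeriv 4 α x * β y + 2 * (iteratedDeriv 2 α x * iteratedDeriv 2 β y)
        + α x * iteratedDeriv 4 β y := by
  have hl : lap (fun x y => α x * β y)
      = fun x y => iteratedDeriv 2 α x * β y + α x * iteratedDeriv 2 β y :=
    funext fun a => funext fun b => lap_sep hα hβ a b
  rw [hl]
  simp only [lap, pdx2, pdy2]
  have i4a : iteratedDeriv 2 (iteratedDeriv 2 α) x = iteratedDeriv 4 α x := by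
    rw [itd_itd 2 2]
  have i4b : iteratedDeriv 2 (iteratedDeriv 2 β) y = iteratedDeriv 4 β y := by
    rw [itd_itd 2 2]
  have e1 := itd2_comb (smooth_itd hα 2) hα (β y) (iteratedDeriv 2 β y) x
  have e2 := itd2_comb' hβ (smooth_itd hβ 2) (iteratedDeriv 2 α x) (α x) y
  rw [e1, e2, i4a, i4b]
  ring

lemma mu_zero (hα : ContDiff ℝ ∞ α) (hβ : ContDiff ℝ ∞ β) {μ x0 y0 : ℝ}
    (hx0 : x0 ∈ Ioo (-1:ℝ) 1) (hax0 : α x0 ≠ 0) (hy0 : y0 ∈ Ioo (-1:ℝ) 1) (hby0 : β y0 ≠ 0)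
    (hE : ∀ x ∈ Icc (-1:ℝ) 1, ∀ y ∈ Icc (-1:ℝ) 1,
      iteratedDeriv 4 α x * β y + 2 * (iteratedDeriv 2 α x * iteratedDeriv 2 β y)
        + α x * iteratedDeriv 4 β y = μ * (α x * β y))
    (h0 : ∀ x ∈ Icc (-1:ℝ) 1, ∀ y ∈ Icc (-1:ℝ) 1,
      iteratedDeriv 2 α x * β y + α x * iteratedDeriv 2 β y = 0) : μ = 0 := by
  have hy0' : y0 ∈ Icc (-1:ℝ) 1 := Ioo_subset_Icc_self hy0
  have hx0' : x0 ∈ Icc (-1:ℝ) 1 := Ioo_subset_Icc_self hx0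
  have hxz : iteratedDeriv 2
      (fun t => iteratedDeriv 2 α t * β y0 + α t * iteratedDeriv 2 β y0) x0 = 0 :=
    itd2_zero (fun t ht => h0 t (Ioo_subset_Icc_self ht) y0 hy0') hx0
  have hxe := itd2_comb (smooth_itd hα 2) hα (β y0) (iteratedDeriv 2 β y0) x0
  have i4a : iteratedDeriv 2 (iteratedDeriv 2 α) x0 = iteratedDeriv 4 α x0 := by
    rw [itd_itd 2 2]
  rw [hxe, i4a] at hxz
  have hyz : iteratedDeriv 2
      (fun t => iteratedDeriv 2 α x0 * β t + α x0 * iteratedDeriv 2 β t) y0 = 0 :=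
    itd2_zero (fun t ht => h0 x0 hx0' t (Ioo_subset_Icc_self ht)) hy0
  have hye := itd2_comb' hβ (smooth_itd hβ 2) (iteratedDeriv 2 α x0) (α x0) y0
  have i4b : iteratedDeriv 2 (iteratedDeriv 2 β) y0 = iteratedDeriv 4 β y0 := by
    rw [itd_itd 2 2]
  rw [hye, i4b] at hyz
  have hmain := hE x0 hx0' y0 hy0'
  have hz : μ * (α x0 * β y0) = 0 := by linear_combination hxz + hyz - hmain
  rcases mul_eq_zero.mp hz with h | h
  · exact h
  · exact absurd h (mul_ne_zero hax0 hby0)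

lemma key (hα : ContDiff ℝ ∞ α) (hβ : ContDiff ℝ ∞ β) {μ x0 y0 : ℝ}
    (hx0 : x0 ∈ Ioo (-1:ℝ) 1) (hax0 : α x0 ≠ 0) (hy0 : y0 ∈ Ioo (-1:ℝ) 1) (hby0 : β y0 ≠ 0)
    (hE : ∀ x ∈ Icc (-1:ℝ) 1, ∀ y ∈ Icc (-1:ℝ) 1,
      iteratedDeriv 4 α x * β y + 2 * (iteratedDeriv 2 α x * iteratedDeriv 2 β y)
        + α x * iteratedDeriv 4 β y = μ * (α x * β y))
    (hx1 : ∀ y ∈ Icc (-1:ℝ) 1, iteratedDeriv 2 α 1 * β y + α 1 * iteratedDeriv 2 β y = 0)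
    (hx1' : ∀ y ∈ Icc (-1:ℝ) 1, iteratedDeriv 3 α 1 * β y + deriv α 1 * iteratedDeriv 2 β y = 0)
    (hy1 : ∀ x ∈ Icc (-1:ℝ) 1, iteratedDeriv 2 α x * β 1 + α x * iteratedDeriv 2 β 1 = 0)
    (hy1' : ∀ x ∈ Icc (-1:ℝ) 1, iteratedDeriv 2 α x * deriv β 1 + α x * iteratedDeriv 3 β 1 = 0) :
    μ = 0 ∧ ∀ x ∈ Icc (-1:ℝ) 1, ∀ y ∈ Icc (-1:ℝ) 1,
      iteratedDeriv 2 α x * β y + α x * iteratedDeriv 2 β y = 0 := by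
  have h1m : (1:ℝ) ∈ Icc (-1:ℝ) 1 := by norm_num
  have hy0' : y0 ∈ Icc (-1:ℝ) 1 := Ioo_subset_Icc_self hy0
  have hx0' : x0 ∈ Icc (-1:ℝ) 1 := Ioo_subset_Icc_self hx0
  by_cases hPβ : ∃ lam, ∀ y ∈ Icc (-1:ℝ) 1, iteratedDeriv 2 β y = lam * β y
  · obtain ⟨lam, hlam⟩ := hPβ
    have hB3 : ∀ y ∈ Icc (-1:ℝ) 1, iteratedDeriv 3 β y = lam * deriv β y := by
      have hder := eqOn_deriv (smooth_itd hβ 2) hβ lam hlam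
      intro y hy
      rw [show (3:ℕ) = 2 + 1 from rfl, iteratedDeriv_succ]
      exact hder y hy
    by_cases hcz : β 1 = 0 ∧ deriv β 1 = 0
    · exact absurd (ode2_zero hβ lam hlam hcz.1 hcz.2 y0 hy0') hby0
    · have hg : ∀ x ∈ Icc (-1:ℝ) 1, iteratedDeriv 2 α x + lam * α x = 0 := by
        intro x hx
        rcases not_and_or.mp hcz with h | h
        · have h1 := hy1 x hx
          rw [hlam 1 h1m] at h1
          have hz : (iteratedDeriv 2 α x + lam * α x) * β 1 = 0 := by linear_combination h1
          exact (mul_eq_zero.mp hz).resolve_right h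
        · have h1 := hy1' x hx
          rw [hB3 1 h1m] at h1
          have hz : (iteratedDeriv 2 α x + lam * α x) * deriv β 1 = 0 := by
            linear_combination h1
          exact (mul_eq_zero.mp hz).resolve_right h
      have h0 : ∀ x ∈ Icc (-1:ℝ) 1, ∀ y ∈ Icc (-1:ℝ) 1,
          iteratedDeriv 2 α x * β y + α x * iteratedDeriv 2 β y = 0 := by
        intro x hx y hy
        rw [hlam y hy]
        linear_combination β y * hg x hx
      exact ⟨mu_zero hα hβ hx0 hax0 hy0 hby0 hE h0, h0⟩
  · exfalso
    push_neg at hPβ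
    have hα1 : α 1 = 0 := by
      by_contra h
      obtain ⟨y, hy, hne⟩ := hPβ (-(iteratedDeriv 2 α 1) / α 1)
      apply hne
      have h1 := hx1 y hy
      field_simp
      linear_combination h1
    have hA21 : iteratedDeriv 2 α 1 = 0 := by
      have h1 := hx1 y0 hy0'
      rw [hα1] at h1
      have hz : iteratedDeriv 2 α 1 * β y0 = 0 := by linear_combination h1
      exact (mul_eq_zero.mp hz).resolve_right hby0
    have hA11 : deriv α 1 = 0 := by
      by_contra h
      obtain ⟨y, hy, hne⟩ := hPβ (-(iteratedDeriv 3 α 1) / deriv α 1)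
      apply hne
      have h1 := hx1' y hy
      field_simp
      linear_combination h1
    have hA31 : iteratedDeriv 3 α 1 = 0 := by
      have h1 := hx1' y0 hy0'
      rw [hA11] at h1
      have hz : iteratedDeriv 3 α 1 * β y0 = 0 := by linear_combination h1
      exact (mul_eq_zero.mp hz).resolve_right hby0
    have hode : ∀ x ∈ Icc (-1:ℝ) 1, iteratedDeriv 4 α x
        = (-(2 * iteratedDeriv 2 β y0) / β y0) * iteratedDeriv 2 α x
          + ((μ * β y0 - iteratedDeriv 4 β y0) / β y0) * α x := by
      intro x hx
      have h1 := hE x hx y0 hy0'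
      rw [div_mul_eq_mul_div, div_mul_eq_mul_div, ← add_div, eq_div_iff hby0]
      linear_combination h1
    exact hax0 (ode4_zero hα _ _ hode hα1 hA11 hA21 hA31 x0 hx0')

end Stmt4Aux


open Stmt4Aux in
/-- If `u(x,y) = α(x)β(y)` is a nonzero separable smooth function satisfying
`Δ²u = μ u` on the square `Ω = [-1,1]²` with the all-natural boundary conditions
`Δu = 0` and `∂_ν Δu = 0` on `∂Ω`, then `μ = 0` and `Δu ≡ 0` on `Ω`. -/
theorem stmt_4 (α β : ℝ → ℝ) (μ : ℝ)
    (hα : ContDiff ℝ (⊤ : ℕ∞) α) (hβ : ContDiff ℝ (⊤ : ℕ∞) β)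
    (hα0 : ∃ x ∈ Icc (-1 : ℝ) 1, α x ≠ 0)
    (hβ0 : ∃ y ∈ Icc (-1 : ℝ) 1, β y ≠ 0)
    (u : ℝ → ℝ → ℝ) (hu : u = fun x y => α x * β y)
    (heq : ∀ x ∈ Icc (-1 : ℝ) 1, ∀ y ∈ Icc (-1 : ℝ) 1,
        lap (lap u) x y = μ * u x y)
    (hbc1 : ∀ x ∈ Icc (-1 : ℝ) 1, ∀ y ∈ Icc (-1 : ℝ) 1,
        (x = -1 ∨ x = 1 ∨ y = -1 ∨ y = 1) → lap u x y = 0)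
    (hbc2x : ∀ y ∈ Icc (-1 : ℝ) 1,
        deriv (fun t => lap u t y) (-1) = 0 ∧ deriv (fun t => lap u t y) 1 = 0)
    (hbc2y : ∀ x ∈ Icc (-1 : ℝ) 1,
        deriv (fun t => lap u x t) (-1) = 0 ∧ deriv (fun t => lap u x t) 1 = 0) :
    μ = 0 ∧ ∀ x ∈ Icc (-1 : ℝ) 1, ∀ y ∈ Icc (-1 : ℝ) 1, lap u x y = 0 := by
  subst hu
  have hα' : ContDiff ℝ ∞ α := hα.of_le (by simp)
  have hβ' : ContDiff ℝ ∞ β := hβ.of_le (by simp)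
  obtain ⟨x0, hx0, hax0⟩ := exists_ne_interior hα'.continuous hα0
  obtain ⟨y0, hy0, hby0⟩ := exists_ne_interior hβ'.continuous hβ0
  have h1m : (1:ℝ) ∈ Icc (-1:ℝ) 1 := by norm_num
  have hE : ∀ x ∈ Icc (-1:ℝ) 1, ∀ y ∈ Icc (-1:ℝ) 1,
      iteratedDeriv 4 α x * β y + 2 * (iteratedDeriv 2 α x * iteratedDeriv 2 β y)
        + α x * iteratedDeriv 4 β y = μ * (α x * β y) := by
    intro x hx y hy
    have h := heq x hx y hy
    rwa [laplap_sep hα' hβ'] at h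
  have hx1 : ∀ y ∈ Icc (-1:ℝ) 1,
      iteratedDeriv 2 α 1 * β y + α 1 * iteratedDeriv 2 β y = 0 := by
    intro y hy
    have h := hbc1 1 h1m y hy (Or.inr (Or.inl rfl))
    rwa [lap_sep hα' hβ'] at h
  have hy1 : ∀ x ∈ Icc (-1:ℝ) 1,
      iteratedDeriv 2 α x * β 1 + α x * iteratedDeriv 2 β 1 = 0 := by
    intro x hx
    have h := hbc1 x hx 1 h1m (Or.inr (Or.inr (Or.inr rfl)))
    rwa [lap_sep hα' hβ'] at h
  have hfunx : ∀ y : ℝ, (fun t => lap (fun x y => α x * β y) t y)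
      = fun t => iteratedDeriv 2 α t * β y + α t * iteratedDeriv 2 β y :=
    fun y => funext fun t => lap_sep hα' hβ' t y
  have hfuny : ∀ x : ℝ, (fun t => lap (fun x y => α x * β y) x t)
      = fun t => iteratedDeriv 2 α x * β t + α x * iteratedDeriv 2 β t :=
    fun x => funext fun t => lap_sep hα' hβ' x t
  have hd3a : iteratedDeriv 3 α = deriv (iteratedDeriv 2 α) := by
    rw [show (3:ℕ) = 2 + 1 from rfl, iteratedDeriv_succ]
  have hd3b : iteratedDeriv 3 β = deriv (iteratedDeriv 2 β) := by
    rw [show (3:ℕ) = 2 + 1 from rfl, iteratedDeriv_succ]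
  have hx1' : ∀ y ∈ Icc (-1:ℝ) 1,
      iteratedDeriv 3 α 1 * β y + deriv α 1 * iteratedDeriv 2 β y = 0 := by
    intro y hy
    have h := (hbc2x y hy).2
    rw [hfunx y, deriv_comb (smooth_itd hα' 2) hα' (β y) (iteratedDeriv 2 β y) 1] at h
    rw [hd3a]
    exact h
  have hy1' : ∀ x ∈ Icc (-1:ℝ) 1,
      iteratedDeriv 2 α x * deriv β 1 + α x * iteratedDeriv 3 β 1 = 0 := by
    intro x hx
    have h := (hbc2y x hx).2
    rw [hfuny x, deriv_comb' hβ' (smooth_itd hβ' 2) (iteratedDeriv 2 α x) (α x) 1] at h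
    rw [hd3b]
    exact h
  obtain ⟨hμ, h0⟩ := key hα' hβ' hx0 hax0 hy0 hby0 hE hx1 hx1' hy1 hy1'
  refine ⟨hμ, ?_⟩
  intro x hx y hy
  rw [lap_sep hα' hβ']
  exact h0 x hx y hy
end

section
/- There is no nonzero separable smooth function u(x,y) = α(x)β(y) satisfying Δ²u = μu on Ω = [−1,1]² with the clamped boundary conditions u = 0 and ∂_ν u = 0 on ∂Ω, for any μ ∈ ℝ. -/
open Real Set
open scoped ContDiff

lemma id2 (g : ℝ → ℝ) : iteratedDeriv 2 g = deriv (deriv g) := by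
  rw [iteratedDeriv_succ, iteratedDeriv_one]

lemma d2_mul_const (f : ℝ → ℝ) (c : ℝ) :
    iteratedDeriv 2 (fun t => f t * c) = fun t => iteratedDeriv 2 f t * c := by
  rw [id2, id2, deriv_mul_const_field', deriv_mul_const_field']

lemma d2_const_mul (f : ℝ → ℝ) (c : ℝ) :
    iteratedDeriv 2 (fun t => c * f t) = fun t => c * iteratedDeriv 2 f t := by
  rw [id2, id2, deriv_const_mul_field', deriv_const_mul_field']

lemma contDiff_deriv {f : ℝ → ℝ} (hf : ContDiff ℝ ∞ f) : ContDiff ℝ ∞ (deriv f) :=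
  (contDiff_infty_iff_deriv.mp hf).2

lemma contDiff_d2 {f : ℝ → ℝ} (hf : ContDiff ℝ ∞ f) : ContDiff ℝ ∞ (iteratedDeriv 2 f) := by
  rw [id2]; exact contDiff_deriv (contDiff_deriv hf)

lemma d2_add (f g : ℝ → ℝ) (hf : ContDiff ℝ ∞ f) (hg : ContDiff ℝ ∞ g) :
    iteratedDeriv 2 (fun t => f t + g t) = fun t => iteratedDeriv 2 f t + iteratedDeriv 2 g t := by
  have hdf : Differentiable ℝ f := hf.differentiable (by norm_num)
  have hdg : Differentiable ℝ g := hg.differentiable (by norm_num)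
  have hdf' : Differentiable ℝ (deriv f) := (contDiff_deriv hf).differentiable (by norm_num)
  have hdg' : Differentiable ℝ (deriv g) := (contDiff_deriv hg).differentiable (by norm_num)
  rw [id2, id2, id2]
  have e1 : (deriv fun t => f t + g t) = fun t => deriv f t + deriv g t :=
    funext fun t => deriv_add (hdf t) (hdg t)
  rw [e1]
  exact funext fun t => deriv_add (hdf' t) (hdg' t)

/-- A solution of `f'' = k f` on `[-1,1]` with `f(-1) = f'(-1) = 0` vanishes on `[-1,1]`. -/
lemma ode2_zero (f : ℝ → ℝ) (k : ℝ) (hf : ContDiff ℝ ∞ f)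
    (hode : ∀ x ∈ Icc (-1:ℝ) 1, deriv (deriv f) x = k * f x)
    (h0 : f (-1) = 0) (h1 : deriv f (-1) = 0) :
    ∀ x ∈ Icc (-1:ℝ) 1, f x = 0 := by
  set L : ℝ × ℝ →L[ℝ] ℝ × ℝ :=
    (ContinuousLinearMap.snd ℝ ℝ ℝ).prod (k • ContinuousLinearMap.fst ℝ ℝ ℝ) with hL
  have hdf : Differentiable ℝ f := hf.differentiable (by norm_num)
  have hdf' : Differentiable ℝ (deriv f) := (contDiff_deriv hf).differentiable (by norm_num)
  set F : ℝ → ℝ × ℝ := fun t => (f t, deriv f t) with hF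
  have hFcont : ContinuousOn F (Icc (-1:ℝ) 1) :=
    (hdf.continuous.prodMk hdf'.continuous).continuousOn
  have hF' : ∀ t ∈ Ico (-1:ℝ) 1, HasDerivWithinAt F (L (F t)) (Ici t) t := by
    intro t ht
    have h1' : HasDerivAt f (deriv f t) t := (hdf t).hasDerivAt
    have h2' : HasDerivAt (deriv f) (deriv (deriv f) t) t := (hdf' t).hasDerivAt
    have hp := h1'.prodMk h2'
    rw [hode t (Ico_subset_Icc_self ht)] at hp
    have : L (F t) = (deriv f t, k * f t) := by simp [hL, hF]
    rw [this]
    exact hp.hasDerivWithinAt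
  have hG' : ∀ t ∈ Ico (-1:ℝ) 1,
      HasDerivWithinAt (fun _ : ℝ => ((0:ℝ), (0:ℝ))) (L ((0:ℝ), (0:ℝ))) (Ici t) t := by
    intro t _
    have : L ((0:ℝ), (0:ℝ)) = ((0:ℝ), (0:ℝ)) := by simp [hL]
    rw [this]
    exact hasDerivWithinAt_const t _ _
  have huniq :=
    ODE_solution_unique (v := fun _ p => L p) (K := ‖L‖₊) (fun _ => L.lipschitz)
      hFcont hF' continuousOn_const hG' (by simp [hF, h0, h1])
  intro x hx
  have := huniq hx
  simpa [hF] using congrArg Prod.fst this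

/-- There is no nonzero separable smooth function `u(x,y) = α(x)β(y)` satisfying
`Δ²u = μ u` on `Ω = [-1,1]²` with the clamped boundary conditions `u = 0` and
`∂_ν u = 0` on `∂Ω`, for any `μ ∈ ℝ`. -/
theorem stmt_9 (α β : ℝ → ℝ) (μ : ℝ)
    (hα : ContDiff ℝ (⊤ : ℕ∞) α) (hβ : ContDiff ℝ (⊤ : ℕ∞) β)
    (hα0 : ∃ x ∈ Icc (-1 : ℝ) 1, α x ≠ 0)
    (hβ0 : ∃ y ∈ Icc (-1 : ℝ) 1, β y ≠ 0)
    (u : ℝ → ℝ → ℝ) (hu : u = fun x y => α x * β y)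
    (heq : ∀ x ∈ Icc (-1 : ℝ) 1, ∀ y ∈ Icc (-1 : ℝ) 1,
        lap (lap u) x y = μ * u x y)
    (hbc0 : ∀ x ∈ Icc (-1 : ℝ) 1, ∀ y ∈ Icc (-1 : ℝ) 1,
        (x = -1 ∨ x = 1 ∨ y = -1 ∨ y = 1) → u x y = 0)
    (hbc1x : ∀ y ∈ Icc (-1 : ℝ) 1,
        deriv (fun t => u t y) (-1) = 0 ∧ deriv (fun t => u t y) 1 = 0)
    (hbc1y : ∀ x ∈ Icc (-1 : ℝ) 1,
        deriv (fun t => u x t) (-1) = 0 ∧ deriv (fun t => u x t) 1 = 0) :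
    False := by
  subst hu
  replace hα : ContDiff ℝ ∞ α := hα.of_le (by simp)
  replace hβ : ContDiff ℝ ∞ β := hβ.of_le (by simp)
  obtain ⟨x₀, hx₀, hαx₀⟩ := hα0
  obtain ⟨y₀, hy₀, hβy₀⟩ := hβ0
  have hm1 : (-1:ℝ) ∈ Icc (-1:ℝ) 1 := by constructor <;> norm_num
  set α2 := iteratedDeriv 2 α with hα2def
  set β2 := iteratedDeriv 2 β with hβ2def
  set α4 := iteratedDeriv 2 α2 with hα4def
  set β4 := iteratedDeriv 2 β2 with hβ4def
  have hα2c : ContDiff ℝ ∞ α2 := contDiff_d2 hα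
  have hβ2c : ContDiff ℝ ∞ β2 := contDiff_d2 hβ
  -- the separated PDE
  have lapu : lap (fun x y => α x * β y) = fun x y => α2 x * β y + α x * β2 y := by
    funext x y
    show iteratedDeriv 2 (fun t => α t * β y) x + iteratedDeriv 2 (fun t => α x * β t) y = _
    rw [d2_mul_const α (β y), d2_const_mul β (α x)]
  have key : ∀ x ∈ Icc (-1:ℝ) 1, ∀ y ∈ Icc (-1:ℝ) 1,
      α4 x * β y + 2*(α2 x * β2 y) + α x * β4 y = μ * (α x * β y) := by
    intro x hx y hy
    have h := heq x hx y hy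
    rw [lapu] at h
    have e1 : lap (fun x y => α2 x * β y + α x * β2 y) x y
        = (α4 x * β y + α2 x * β2 y) + (α2 x * β2 y + α x * β4 y) := by
      show iteratedDeriv 2 (fun t => α2 t * β y + α t * β2 y) x
          + iteratedDeriv 2 (fun t => α2 x * β t + α x * β2 t) y = _
      rw [d2_add (fun t => α2 t * β y) (fun t => α t * β2 y)
            (hα2c.mul contDiff_const) (hα.mul contDiff_const),
          d2_add (fun t => α2 x * β t) (fun t => α x * β2 t)
            (contDiff_const.mul hβ) (contDiff_const.mul hβ2c)]
      simp only []
      rw [d2_mul_const α2 (β y), d2_mul_const α (β2 y),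
          d2_const_mul β (α2 x), d2_const_mul β2 (α x)]
    rw [e1] at h
    have h' : α4 x * β y + α2 x * β2 y + (α2 x * β2 y + α x * β4 y) = μ * (α x * β y) := h
    linarith
  -- boundary values
  have hβm1 : β (-1) = 0 := by
    have h := hbc0 x₀ hx₀ (-1) hm1 (Or.inr (Or.inr (Or.inl rfl)))
    exact (mul_eq_zero.mp h).resolve_left hαx₀
  have hαm1 : α (-1) = 0 := by
    have h := hbc0 (-1) hm1 y₀ hy₀ (Or.inl rfl)
    exact (mul_eq_zero.mp h).resolve_right hβy₀
  have hβ'm1 : deriv β (-1) = 0 := by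
    have h : deriv (fun t => α x₀ * β t) (-1) = 0 := (hbc1y x₀ hx₀).1
    rw [deriv_const_mul_field'] at h
    exact (mul_eq_zero.mp h).resolve_left hαx₀
  have hα'm1 : deriv α (-1) = 0 := by
    have h : deriv (fun t => α t * β y₀) (-1) = 0 := (hbc1x y₀ hy₀).1
    rw [deriv_mul_const_field'] at h
    exact (mul_eq_zero.mp h).resolve_right hβy₀
  -- dichotomy
  by_cases hA : ∀ y₁ ∈ Icc (-1:ℝ) 1, β2 y₁ * β y₀ = β2 y₀ * β y₁
  · -- β'' = c β on [-1,1]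
    have hode : ∀ y ∈ Icc (-1:ℝ) 1, deriv (deriv β) y = (β2 y₀ / β y₀) * β y := by
      intro y hy
      have h := hA y hy
      have : β2 y = β2 y₀ / β y₀ * β y := by
        field_simp
        linarith
      rw [← this, hβ2def, id2]
    exact hβy₀ (ode2_zero β (β2 y₀ / β y₀) hβ hode hβm1 hβ'm1 y₀ hy₀)
  · push_neg at hA
    obtain ⟨y₁, hy₁, hD⟩ := hA
    set D := β2 y₁ * β y₀ - β2 y₀ * β y₁ with hDdef
    have hDne : D ≠ 0 := sub_ne_zero.mpr hD
    set k := -(β4 y₁ * β y₀ - β4 y₀ * β y₁) / (2 * D) with hkdef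
    have hode : ∀ x ∈ Icc (-1:ℝ) 1, deriv (deriv α) x = k * α x := by
      intro x hx
      have e1 := key x hx y₁ hy₁
      have e0 := key x hx y₀ hy₀
      have comb : 2 * α2 x * D + α x * (β4 y₁ * β y₀ - β4 y₀ * β y₁) = 0 := by
        rw [hDdef]
        linear_combination e1 * β y₀ - e0 * β y₁
      have : α2 x = k * α x := by
        rw [hkdef]
        field_simp
        linarith
      rw [← this, hα2def, id2]
    exact hαx₀ (ode2_zero α k hα hode hαm1 hα'm1 x₀ hx₀)
end

section
/- If u(x,y) = α(x)β(y) satisfies Δ²u = μu on [−1,1]² for some constant μ, with α, β smooth and nowhere zero on open subintervals, then on those subintervals (α''/α)'·(β''/β)' = 0, i.e., at least one of α''/α and β''/β is constant. -/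
open Real Set

private lemma smooth_iter {f : ℝ → ℝ} (hf : ContDiff ℝ (⊤ : ℕ∞) f) (n : ℕ) :
    Differentiable ℝ (iteratedDeriv n f) := by
  have h : iteratedDeriv n f = deriv^[n] f := iteratedDeriv_eq_iterate (𝕜 := ℝ) (F := ℝ)
  rw [h]
  have hf' : ContDiff ℝ (⊤ : ℕ∞) f := hf.of_le (by simp)
  exact (hf'.iterate_deriv n).differentiable (by simp)

/-- If `u(x,y) = α(x)β(y)` satisfies `Δ²u = μ u` on `[-1,1]²`
(written via `Δ²u = α''''β + 2α''β'' + αβ''''`), with `α, β` smooth and nowhere zero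
on open subintervals `Ioo a b ⊆ [-1,1]` and `Ioo p q ⊆ [-1,1]`, then on those
subintervals `(α''/α)'·(β''/β)' = 0`. -/
theorem stmt_10 (α β : ℝ → ℝ) (μ : ℝ) (a b p q : ℝ)
    (hα : ContDiff ℝ (⊤ : ℕ∞) α) (hβ : ContDiff ℝ (⊤ : ℕ∞) β)
    (hab : Ioo a b ⊆ Icc (-1 : ℝ) 1) (hpq : Ioo p q ⊆ Icc (-1 : ℝ) 1)
    (hα0 : ∀ x ∈ Ioo a b, α x ≠ 0) (hβ0 : ∀ y ∈ Ioo p q, β y ≠ 0)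
    (heq : ∀ x ∈ Icc (-1 : ℝ) 1, ∀ y ∈ Icc (-1 : ℝ) 1,
        iteratedDeriv 4 α x * β y + 2 * iteratedDeriv 2 α x * iteratedDeriv 2 β y
          + α x * iteratedDeriv 4 β y = μ * (α x * β y)) :
    ∀ x ∈ Ioo a b, ∀ y ∈ Ioo p q,
      deriv (fun t => iteratedDeriv 2 α t / α t) x *
        deriv (fun t => iteratedDeriv 2 β t / β t) y = 0 := by
  set A : ℝ → ℝ := fun x => iteratedDeriv 4 α x / α x with hA
  set B : ℝ → ℝ := fun x => iteratedDeriv 2 α x / α x with hB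
  set C : ℝ → ℝ := fun y => iteratedDeriv 2 β y / β y with hC
  set D : ℝ → ℝ := fun y => iteratedDeriv 4 β y / β y with hD
  -- differentiability facts
  have hAd : ∀ x ∈ Ioo a b, DifferentiableAt ℝ A x := fun x hx =>
    (smooth_iter hα 4 x).div (hα.differentiable (by simp) x) (hα0 x hx)
  have hBd : ∀ x ∈ Ioo a b, DifferentiableAt ℝ B x := fun x hx =>
    (smooth_iter hα 2 x).div (hα.differentiable (by simp) x) (hα0 x hx)
  have hCd : ∀ y ∈ Ioo p q, DifferentiableAt ℝ C y := fun y hy =>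
    (smooth_iter hβ 2 y).div (hβ.differentiable (by simp) y) (hβ0 y hy)
  -- Step 0: the separated equation
  have key : ∀ x ∈ Ioo a b, ∀ y ∈ Ioo p q, A x + 2 * B x * C y + D y = μ := by
    intro x hx y hy
    have h := heq x (hab hx) y (hpq hy)
    have hαx := hα0 x hx
    have hβy := hβ0 y hy
    simp only [hA, hB, hC, hD]
    field_simp
    linear_combination h
  -- Step 1: differentiate in x
  have key1 : ∀ x ∈ Ioo a b, ∀ y ∈ Ioo p q, deriv A x + 2 * deriv B x * C y = 0 := by
    intro x hx y hy
    have hF : (fun t => A t + 2 * B t * C y + D y) =ᶠ[nhds x] fun _ => μ := by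
      filter_upwards [isOpen_Ioo.mem_nhds hx] with t ht
      exact key t ht y hy
    have h1 : deriv (fun t => A t + 2 * B t * C y + D y) x = 0 := by
      rw [hF.deriv_eq]; exact deriv_const x μ
    have h2 : deriv (fun t => A t + 2 * B t * C y + D y) x
        = deriv A x + 2 * deriv B x * C y := by
      have : (fun t => A t + 2 * B t * C y + D y)
          = fun t => A t + (2 * C y) * B t + D y := by funext t; ring
      rw [this, deriv_add_const, deriv_fun_add (hAd x hx) ((hBd x hx).const_mul _),
        deriv_const_mul _ (hBd x hx)]
      ring
    rw [← h2, h1]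
  -- Step 2: differentiate in y
  intro x hx y hy
  have hG : (fun s => deriv A x + 2 * deriv B x * C s) =ᶠ[nhds y] fun _ => (0:ℝ) := by
    filter_upwards [isOpen_Ioo.mem_nhds hy] with s hs
    exact key1 x hx s hs
  have h1 : deriv (fun s => deriv A x + 2 * deriv B x * C s) y = 0 := by
    rw [hG.deriv_eq]; exact deriv_const y 0
  have h2 : deriv (fun s => deriv A x + 2 * deriv B x * C s) y
      = 2 * deriv B x * deriv C y := by
    rw [deriv_const_add, deriv_const_mul _ (hCd y hy)]
  rw [h2] at h1; linarith
end

section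
/- For any smooth function u on Ω = [−1,1]² with vanishing normal derivative on ∂Ω that is a finite linear combination of the cosine basis functions u_m, the L²-norm of the Laplacian equals the L²-norm of the Hessian: ∫_Ω (Δu)² dx = ∫_Ω |Hu|_F² dx. -/
open Real Set intervalIntegral

/-- Mixed second partial derivative. -/
noncomputable def pdxy (u : ℝ → ℝ → ℝ) (x y : ℝ) : ℝ :=
  deriv (fun t => deriv (fun s => u s t) x) y

/-- Squared Frobenius norm of the Hessian of `u`. -/
noncomputable def hessF2 (u : ℝ → ℝ → ℝ) (x y : ℝ) : ℝ :=
  (pdx2 u x y) ^ 2 + 2 * (pdxy u x y) ^ 2 + (pdy2 u x y) ^ 2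

/-- Tensor-product cosine function `u_m`. -/
noncomputable def cosB (m₁ m₂ : ℕ) (c x y : ℝ) : ℝ :=
  c * Real.cos (π * m₁ / 2 * (x + 1)) * Real.cos (π * m₂ / 2 * (y + 1))

/-! The cosine modes are eigenfunctions of the one-dimensional Neumann problem on `[-1, 1]`, so for
a cosine series `u` the second derivatives `u_xx`, `u_yy` are again cosine series and `u_xy` is a
sine series. Since `(Δu)² - |Hu|²_F = 2 (u_xx u_yy - u_xy²)`, it suffices to show
`∫∫ u_xx u_yy = ∫∫ u_xy²`. Both sides expand into sums of products of one-dimensional integrals,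
and termwise the identity is `ω_l ∫ sin_k sin_l = ω_k ∫ cos_k cos_l` with `ω_k = πk/2`: this is
integration by parts, with no boundary term because `cos_k' = -ω_k sin_k` vanishes at `±1`. -/

noncomputable def modeFreq (k : ℕ) : ℝ := π * k / 2

noncomputable def cosMode (k : ℕ) (x : ℝ) : ℝ := cos (modeFreq k * (x + 1))

noncomputable def sinMode (k : ℕ) (x : ℝ) : ℝ := sin (modeFreq k * (x + 1))

@[fun_prop]
theorem continuous_cosMode (k : ℕ) : Continuous (cosMode k) := by
  unfold cosMode; fun_prop

@[fun_prop]
theorem continuous_sinMode (k : ℕ) : Continuous (sinMode k) := by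
  unfold sinMode; fun_prop

theorem hasDerivAt_cosMode (k : ℕ) (x : ℝ) :
    HasDerivAt (cosMode k) (-modeFreq k * sinMode k x) x := by
  have h := (((hasDerivAt_id' x).add_const 1).const_mul (modeFreq k)).cos
  exact h.congr_deriv (by rw [sinMode]; ring)

theorem hasDerivAt_sinMode (k : ℕ) (x : ℝ) :
    HasDerivAt (sinMode k) (modeFreq k * cosMode k x) x := by
  have h := (((hasDerivAt_id' x).add_const 1).const_mul (modeFreq k)).sin
  exact h.congr_deriv (by rw [cosMode]; ring)

theorem sinMode_neg_one (k : ℕ) : sinMode k (-1) = 0 := by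
  simp [sinMode]

theorem sinMode_one (k : ℕ) : sinMode k 1 = 0 := by
  rw [sinMode, modeFreq, show π * k / 2 * (1 + 1) = k * π by ring, sin_nat_mul_pi]

/-- Integration by parts; the boundary term vanishes because `cosMode k` satisfies the Neumann
condition at `±1`. -/
theorem modeFreq_mul_integral_sinMode_mul_sinMode (k l : ℕ) :
    modeFreq l * ∫ x in (-1 : ℝ)..1, sinMode k x * sinMode l x
      = modeFreq k * ∫ x in (-1 : ℝ)..1, cosMode k x * cosMode l x := by
  have ibp := integral_mul_deriv_eq_deriv_mul (a := -1) (b := 1)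
    (fun x _ => hasDerivAt_sinMode k x) (fun x _ => hasDerivAt_cosMode l x)
    (Continuous.intervalIntegrable (by fun_prop) _ _)
    (Continuous.intervalIntegrable (by fun_prop) _ _)
  rw [sinMode_one, sinMode_neg_one] at ibp
  calc modeFreq l * ∫ x in (-1 : ℝ)..1, sinMode k x * sinMode l x
      = -∫ x in (-1 : ℝ)..1, sinMode k x * (-modeFreq l * sinMode l x) := by
        rw [← integral_const_mul, ← integral_neg]
        congr 1; ext x; ring
    _ = modeFreq k * ∫ x in (-1 : ℝ)..1, cosMode k x * cosMode l x := by
        rw [ibp, ← integral_const_mul]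
        simp only [zero_mul, sub_zero, zero_sub, neg_neg, mul_assoc]

theorem modeFreq_mul_integral_sinMode_mul_sinMode' (k l : ℕ) :
    modeFreq k * ∫ x in (-1 : ℝ)..1, sinMode k x * sinMode l x
      = modeFreq l * ∫ x in (-1 : ℝ)..1, cosMode k x * cosMode l x := by
  simpa only [mul_comm (sinMode l _), mul_comm (cosMode l _)] using
    modeFreq_mul_integral_sinMode_mul_sinMode l k

section SeparableSum

variable {ι : Type*} (s : Finset ι) (w d : ι → ℝ)

theorem deriv_sum_mul_mul_const {f f' : ι → ℝ → ℝ} (c : ι → ℝ)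
    (hf : ∀ i t, HasDerivAt (f i) (d i * f' i t) t) :
    deriv (fun t => ∑ i ∈ s, w i * (f i t * c i))
      = fun t => ∑ i ∈ s, w i * d i * (f' i t * c i) := by
  funext t
  refine (HasDerivAt.fun_sum fun i _ => ((hf i t).mul_const (c i)).const_mul (w i)).deriv.trans ?_
  exact Finset.sum_congr rfl fun i _ => by ring

theorem deriv_sum_mul_const_mul {g g' : ι → ℝ → ℝ} (c : ι → ℝ)
    (hg : ∀ i t, HasDerivAt (g i) (d i * g' i t) t) :
    deriv (fun t => ∑ i ∈ s, w i * (c i * g i t))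
      = fun t => ∑ i ∈ s, w i * d i * (c i * g' i t) := by
  simpa only [mul_comm (c _)] using deriv_sum_mul_mul_const s w d c hg

end SeparableSum

section IteratedIntegral

variable {a₁ b₁ a₂ b₂ : ℝ}

theorem integral_integral_sum_mul {ι : Type*} (s : Finset ι) {f g : ι → ℝ → ℝ}
    (hf : ∀ i, IntervalIntegrable (f i) MeasureTheory.volume a₁ b₁)
    (hg : ∀ i, IntervalIntegrable (g i) MeasureTheory.volume a₂ b₂) :
    ∫ x in a₁..b₁, ∫ y in a₂..b₂, ∑ i ∈ s, f i x * g i y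
      = ∑ i ∈ s, (∫ x in a₁..b₁, f i x) * ∫ y in a₂..b₂, g i y := by
  have inner : ∀ x, ∫ y in a₂..b₂, ∑ i ∈ s, f i x * g i y
      = ∑ i ∈ s, f i x * ∫ y in a₂..b₂, g i y := fun x => by
    rw [integral_finsetSum fun i _ => (hg i).const_mul (f i x)]
    simp only [integral_const_mul]
  simp only [inner]
  rw [integral_finsetSum fun i _ => (hf i).mul_const _]
  simp only [integral_mul_const]

theorem integral_integral_sum_mul_sum {ι : Type*} (s : Finset ι) (v w : ι → ℝ)
    {f g f' g' : ι → ℝ → ℝ} (hf : ∀ i, Continuous (f i)) (hg : ∀ i, Continuous (g i))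
    (hf' : ∀ i, Continuous (f' i)) (hg' : ∀ i, Continuous (g' i)) :
    ∫ x in a₁..b₁, ∫ y in a₂..b₂,
        (∑ i ∈ s, v i * (f i x * g i y)) * ∑ j ∈ s, w j * (f' j x * g' j y)
      = ∑ i ∈ s, ∑ j ∈ s, v i * w j *
          ((∫ x in a₁..b₁, f i x * f' j x) * ∫ y in a₂..b₂, g i y * g' j y) := by
  have expand : ∀ x y, (∑ i ∈ s, v i * (f i x * g i y)) * ∑ j ∈ s, w j * (f' j x * g' j y)
      = ∑ p ∈ s ×ˢ s, v p.1 * w p.2 * (f p.1 x * f' p.2 x) * (g p.1 y * g' p.2 y) := by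
    intro x y
    rw [Finset.sum_mul_sum, ← Finset.sum_product']
    exact Finset.sum_congr rfl fun p _ => by ring
  simp only [expand]
  refine (integral_integral_sum_mul (s ×ˢ s)
      (f := fun p x => v p.1 * w p.2 * (f p.1 x * f' p.2 x)) (g := fun p y => g p.1 y * g' p.2 y)
      (fun p => (continuous_const.mul ((hf p.1).mul (hf' p.2))).intervalIntegrable _ _)
      (fun p => ((hg p.1).mul (hg' p.2)).intervalIntegrable _ _)).trans ?_
  simp only [Finset.sum_product, integral_const_mul, mul_assoc]

theorem integral_integral_add {f g : ℝ → ℝ → ℝ} (hf : Continuous fun p : ℝ × ℝ => f p.1 p.2)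
    (hg : Continuous fun p : ℝ × ℝ => g p.1 p.2) :
    ∫ x in a₁..b₁, ∫ y in a₂..b₂, (f x y + g x y)
      = (∫ x in a₁..b₁, ∫ y in a₂..b₂, f x y) + ∫ x in a₁..b₁, ∫ y in a₂..b₂, g x y := by
  rw [integral_congr fun x _ => integral_add ((hf.uncurry_left x).intervalIntegrable _ _)
    ((hg.uncurry_left x).intervalIntegrable _ _)]
  exact integral_add
    ((continuous_parametric_intervalIntegral_of_continuous' hf _ _).intervalIntegrable _ _)
    ((continuous_parametric_intervalIntegral_of_continuous' hg _ _).intervalIntegrable _ _)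

theorem integral_integral_add_sq_of_mul_eq_sq {A B C : ℝ → ℝ → ℝ}
    (hA : Continuous fun p : ℝ × ℝ => A p.1 p.2) (hB : Continuous fun p : ℝ × ℝ => B p.1 p.2)
    (hC : Continuous fun p : ℝ × ℝ => C p.1 p.2)
    (h : ∫ x in a₁..b₁, ∫ y in a₂..b₂, A x y * B x y = ∫ x in a₁..b₁, ∫ y in a₂..b₂, C x y ^ 2) :
    ∫ x in a₁..b₁, ∫ y in a₂..b₂, (A x y + B x y) ^ 2
      = ∫ x in a₁..b₁, ∫ y in a₂..b₂, (A x y ^ 2 + 2 * C x y ^ 2 + B x y ^ 2) := by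
  have hAB : Continuous fun p : ℝ × ℝ => A p.1 p.2 ^ 2 + B p.1 p.2 ^ 2 := (hA.pow 2).add (hB.pow 2)
  calc ∫ x in a₁..b₁, ∫ y in a₂..b₂, (A x y + B x y) ^ 2
      = ∫ x in a₁..b₁, ∫ y in a₂..b₂, (A x y ^ 2 + B x y ^ 2 + 2 * (A x y * B x y)) := by
        congr 1; ext x; congr 1; ext y; ring
    _ = ∫ x in a₁..b₁, ∫ y in a₂..b₂, (A x y ^ 2 + B x y ^ 2 + 2 * C x y ^ 2) := by
        rw [integral_integral_add (g := fun x y => 2 * (A x y * B x y)) hAB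
            (continuous_const.mul (hA.mul hB)),
          integral_integral_add (g := fun x y => 2 * C x y ^ 2) hAB
            (continuous_const.mul (hC.pow 2))]
        simp only [integral_const_mul, h]
    _ = ∫ x in a₁..b₁, ∫ y in a₂..b₂, (A x y ^ 2 + 2 * C x y ^ 2 + B x y ^ 2) := by
        congr 1; ext x; congr 1; ext y; ring

end IteratedIntegral

section CosineSeries

noncomputable def cosSeries (F : Finset (ℕ × ℕ)) (b : ℕ × ℕ → ℝ) (x y : ℝ) : ℝ :=
  ∑ m ∈ F, b m * (cosMode m.1 x * cosMode m.2 y)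

noncomputable def sinSeries (F : Finset (ℕ × ℕ)) (b : ℕ × ℕ → ℝ) (x y : ℝ) : ℝ :=
  ∑ m ∈ F, b m * (sinMode m.1 x * sinMode m.2 y)

variable (F : Finset (ℕ × ℕ)) (b : ℕ × ℕ → ℝ)

theorem pdx2_cosSeries :
    pdx2 (cosSeries F b) = cosSeries F (fun m => -modeFreq m.1 ^ 2 * b m) := by
  funext x y
  rw [pdx2, iteratedDeriv_succ, iteratedDeriv_one]
  simp only [cosSeries, deriv_sum_mul_mul_const F b _ _ fun m => hasDerivAt_cosMode m.1,
    deriv_sum_mul_mul_const F _ _ _ fun m => hasDerivAt_sinMode m.1]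
  exact Finset.sum_congr rfl fun m _ => by ring

theorem pdy2_cosSeries :
    pdy2 (cosSeries F b) = cosSeries F (fun m => -modeFreq m.2 ^ 2 * b m) := by
  funext x y
  rw [pdy2, iteratedDeriv_succ, iteratedDeriv_one]
  simp only [cosSeries, deriv_sum_mul_const_mul F b _ _ fun m => hasDerivAt_cosMode m.2,
    deriv_sum_mul_const_mul F _ _ _ fun m => hasDerivAt_sinMode m.2]
  exact Finset.sum_congr rfl fun m _ => by ring

theorem pdxy_cosSeries :
    pdxy (cosSeries F b) = sinSeries F (fun m => modeFreq m.1 * modeFreq m.2 * b m) := by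
  funext x y
  simp only [pdxy, cosSeries, sinSeries,
    deriv_sum_mul_mul_const F b _ _ fun m => hasDerivAt_cosMode m.1,
    deriv_sum_mul_const_mul F _ _ _ fun m => hasDerivAt_cosMode m.2]
  exact Finset.sum_congr rfl fun m _ => by ring

theorem continuous_cosSeries : Continuous fun p : ℝ × ℝ => cosSeries F b p.1 p.2 := by
  unfold cosSeries; fun_prop

theorem continuous_sinSeries : Continuous fun p : ℝ × ℝ => sinSeries F b p.1 p.2 := by
  unfold sinSeries; fun_prop

theorem integral_integral_pdx2_mul_pdy2_cosSeries :
    ∫ x in (-1 : ℝ)..1, ∫ y in (-1 : ℝ)..1, pdx2 (cosSeries F b) x y * pdy2 (cosSeries F b) x y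
      = ∫ x in (-1 : ℝ)..1, ∫ y in (-1 : ℝ)..1, pdxy (cosSeries F b) x y ^ 2 := by
  simp only [pdx2_cosSeries, pdy2_cosSeries, pdxy_cosSeries, sq, cosSeries, sinSeries]
  rw [integral_integral_sum_mul_sum F _ _ (fun m => continuous_cosMode m.1)
      (fun m => continuous_cosMode m.2) (fun m => continuous_cosMode m.1)
      (fun m => continuous_cosMode m.2),
    integral_integral_sum_mul_sum F _ _ (fun m => continuous_sinMode m.1)
      (fun m => continuous_sinMode m.2) (fun m => continuous_sinMode m.1)
      (fun m => continuous_sinMode m.2)]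
  refine Finset.sum_congr rfl fun m _ => Finset.sum_congr rfl fun n _ => ?_
  have h₁ := modeFreq_mul_integral_sinMode_mul_sinMode m.1 n.1
  have h₂ := modeFreq_mul_integral_sinMode_mul_sinMode' m.2 n.2
  linear_combination (-(b m * b n * modeFreq m.1 * modeFreq n.2)) *
    ((modeFreq m.2 * ∫ y in (-1 : ℝ)..1, sinMode m.2 y * sinMode n.2 y) * h₁
      + (modeFreq m.1 * ∫ x in (-1 : ℝ)..1, cosMode m.1 x * cosMode n.1 x) * h₂)

theorem integral_integral_lap_sq_cosSeries :
    ∫ x in (-1 : ℝ)..1, ∫ y in (-1 : ℝ)..1, lap (cosSeries F b) x y ^ 2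
      = ∫ x in (-1 : ℝ)..1, ∫ y in (-1 : ℝ)..1, hessF2 (cosSeries F b) x y := by
  have hxx : Continuous fun p : ℝ × ℝ => pdx2 (cosSeries F b) p.1 p.2 := by
    rw [pdx2_cosSeries]; exact continuous_cosSeries F _
  have hyy : Continuous fun p : ℝ × ℝ => pdy2 (cosSeries F b) p.1 p.2 := by
    rw [pdy2_cosSeries]; exact continuous_cosSeries F _
  have hxy : Continuous fun p : ℝ × ℝ => pdxy (cosSeries F b) p.1 p.2 := by
    rw [pdxy_cosSeries]; exact continuous_sinSeries F _
  exact integral_integral_add_sq_of_mul_eq_sq hxx hyy hxy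
    (integral_integral_pdx2_mul_pdy2_cosSeries F b)

end CosineSeries

theorem stmt_12_general (F : Finset (ℕ × ℕ)) (a : ℕ × ℕ → ℝ) (c : ℕ × ℕ → ℝ)
    (u : ℝ → ℝ → ℝ)
    (hu : u = fun x y => ∑ m ∈ F, a m * cosB m.1 m.2 (c m) x y) :
    (∫ x in (-1 : ℝ)..1, ∫ y in (-1 : ℝ)..1, (lap u x y) ^ 2)
      = ∫ x in (-1 : ℝ)..1, ∫ y in (-1 : ℝ)..1, hessF2 u x y := by
  have hu' : u = cosSeries F fun m => a m * c m := by
    funext x y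
    simp only [hu, cosSeries, cosB, cosMode, modeFreq]
    exact Finset.sum_congr rfl fun m _ => by ring
  rw [hu']
  exact integral_integral_lap_sq_cosSeries F _

/-- For a finite linear combination `u = Σ_m û_m u_m` of the `L²`-normalized cosine basis
functions on `Ω = [-1,1]²` (which has vanishing normal derivative on `∂Ω`), the `L²`-norm
of the Laplacian equals the `L²`-norm of the Hessian:
`∫_Ω (Δu)² = ∫_Ω |Hu|_F²`. -/
theorem stmt_12 (F : Finset (ℕ × ℕ)) (a : ℕ × ℕ → ℝ) (c : ℕ × ℕ → ℝ)
    (hnorm : ∀ m ∈ F,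
      (∫ x in (-1 : ℝ)..1, ∫ y in (-1 : ℝ)..1, (cosB m.1 m.2 (c m) x y) ^ 2) = 1)
    (u : ℝ → ℝ → ℝ)
    (hu : u = fun x y => ∑ m ∈ F, a m * cosB m.1 m.2 (c m) x y) :
    (∫ x in (-1 : ℝ)..1, ∫ y in (-1 : ℝ)..1, (lap u x y) ^ 2)
      = ∫ x in (-1 : ℝ)..1, ∫ y in (-1 : ℝ)..1, hessF2 u x y :=
  stmt_12_general F a c u hu
end
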